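/- If a finitely generated group Γ satisfies property (D), i.e., for every pair of non-conjugate elements γ, η ∈ Γ there exists a representation ρ : Γ → SL(m,ℂ) for some m with Tr(ρ(γ)) ≠ Tr(ρ(η)), then Γ is conjugacy separable: for every pair of non-conjugate elements γ, η there is a homomorphism φ from Γ to a finite group Q such that φ(γ) and φ(η) are not conjugate in Q. -/

import Mathlib

/-- The trace of the image of `γ` under a representation into `SL(m, ℂ)`. -/
noncomputable def slTrace {Γ : Type*} [Group Γ] {m : ℕ}
    (ρ : Γ →* Matrix.SpecialLinearGroup (Fin m) ℂ) (γ : Γ) : ℂ :=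
  Matrix.trace (↑(ρ γ) : Matrix (Fin m) (Fin m) ℂ)

/-- A field that is finitely generated as a `ℤ`-module is finite. -/
lemma finite_of_field_of_moduleFiniteInt (K : Type*) [Field K] [Module.Finite ℤ K] :
    Finite K := by
  obtain ⟨p, hp⟩ := CharP.exists K
  rcases CharP.char_is_prime_or_zero K p with hpp | rfl
  · haveI : Fact p.Prime := ⟨hpp⟩
    letI : Algebra (ZMod p) K := ZMod.algebra _ _
    haveI : Module.Finite (ZMod p) K :=
      Module.Finite.of_restrictScalars_finite ℤ (ZMod p) K
    exact Module.finite_of_finite (ZMod p)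
  · haveI : CharZero K := CharP.charP_to_charZero K
    haveI : Algebra.IsIntegral ℤ K := Algebra.IsIntegral.of_finite ℤ K
    have hint : IsIntegral ℤ (algebraMap ℚ K (1 / 2)) := Algebra.IsIntegral.isIntegral _
    rw [isIntegral_algebraMap_iff (algebraMap ℚ K).injective] at hint
    obtain ⟨y, hy⟩ := IsIntegrallyClosed.isIntegral_iff.mp hint
    have h2 : ((2 * y : ℤ) : ℚ) = ((1 : ℤ) : ℚ) := by
      push_cast
      have : (y : ℚ) = 1 / 2 := by exact_mod_cast hy
      rw [this]; ring
    have := Int.cast_injective (α := ℚ) h2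
    omega

instance : IsJacobsonRing ℤ := by
  rw [isJacobsonRing_iff_prime_eq]
  intro P hP
  by_cases hbot : P = ⊥
  · subst hbot
    refine le_antisymm ?_ Ideal.le_jacobson
    intro n hn
    rw [Ideal.jacobson, Ideal.mem_sInf] at hn
    rw [Submodule.mem_bot]
    by_contra hn0
    obtain ⟨p, hple, hp⟩ := Nat.exists_infinite_primes (n.natAbs + 1)
    have hmax : (Ideal.span {(p : ℤ)}).IsMaximal :=
      PrincipalIdealRing.isMaximal_of_irreducible (Nat.prime_iff_prime_int.mp hp).irreducible
    have hmem : n ∈ Ideal.span {(p : ℤ)} := hn ⟨bot_le, hmax⟩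
    rw [Ideal.mem_span_singleton] at hmem
    have hdvd : p ∣ n.natAbs := by
      have := Int.natAbs_dvd_natAbs.mpr hmem
      simpa using this
    have hle := Nat.le_of_dvd (Int.natAbs_pos.mpr hn0) hdvd
    omega
  · haveI := hP
    exact Ideal.jacobson_eq_self_of_isMaximal (H := IsPrime.to_maximal_ideal hbot)

/-- In a finitely generated `ℤ`-algebra which is a domain, any nonzero element avoids some
maximal ideal with finite residue field. -/
lemma exists_maximal_finite_quotient (R : Type) [CommRing R] [IsDomain R]
    [Algebra.FiniteType ℤ R] (t : R) (ht : t ≠ 0) :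
    ∃ M : Ideal R, ∃ _ : M.IsMaximal, t ∉ M ∧ Finite (R ⧸ M) := by
  haveI : IsJacobsonRing R := isJacobsonRing_of_finiteType (A := ℤ)
  have hbot : ((⊥ : Ideal R)).jacobson = ⊥ :=
    isJacobsonRing_iff_prime_eq.mp ‹IsJacobsonRing R› ⊥ Ideal.bot_prime
  have htj : t ∉ ((⊥ : Ideal R)).jacobson := by
    rw [hbot]; simpa using ht
  rw [Ideal.jacobson, Ideal.mem_sInf] at htj
  push_neg at htj
  obtain ⟨M, hMmem, htM⟩ := htj
  haveI hMmax : M.IsMaximal := hMmem.2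
  letI : Field (R ⧸ M) := Ideal.Quotient.field M
  haveI : Algebra.FiniteType ℤ (R ⧸ M) :=
    Algebra.FiniteType.of_surjective
      (Ideal.Quotient.mkₐ ℤ M) Ideal.Quotient.mk_surjective
  haveI : Module.Finite ℤ (R ⧸ M) := finite_of_finite_type_of_isJacobsonRing ℤ (R ⧸ M)
  exact ⟨M, hMmax, htM, finite_of_field_of_moduleFiniteInt (R ⧸ M)⟩

/-- Entries in a subalgebra implies the determinant is in the subalgebra. -/
lemma det_mem_subalgebra {m : ℕ} (A : Subalgebra ℤ ℂ) (M : Matrix (Fin m) (Fin m) ℂ)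
    (h : ∀ i j, M i j ∈ A) : M.det ∈ A := by
  rw [Matrix.det_apply']
  exact Subalgebra.sum_mem _ fun σ _ =>
    Subalgebra.mul_mem _ (Subalgebra.intCast_mem _ _)
      (Subalgebra.prod_mem _ fun i _ => h _ _)


/-- Trace of an entrywise-mapped matrix. -/
lemma trace_map_ringHom {n : Type*} [Fintype n] {R S : Type*} [CommRing R] [CommRing S]
    (f : R →+* S) (X : Matrix n n R) : Matrix.trace (X.map f) = f (Matrix.trace X) := by
  simp [Matrix.trace, Matrix.diag, map_sum, Matrix.map_apply]

/-- Conjugate elements of `SL(n, S)` have equal traces. -/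
lemma trace_coe_eq_of_isConj {n : Type*} [Fintype n] [DecidableEq n] {S : Type*} [CommRing S]
    {x y : Matrix.SpecialLinearGroup n S} (h : IsConj x y) :
    Matrix.trace (↑x : Matrix n n S) = Matrix.trace (↑y : Matrix n n S) := by
  obtain ⟨c, hc⟩ := isConj_iff.mp h
  rw [← hc]
  have h2 : (↑(c * x * c⁻¹) : Matrix n n S) =
      (↑c : Matrix n n S) * (↑x : Matrix n n S) * (↑(c⁻¹) : Matrix n n S) := by
    simp
  rw [h2, Matrix.trace_mul_cycle]
  have h1 : (↑(c⁻¹) : Matrix n n S) * (↑c : Matrix n n S) = 1 := by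
    rw [← Matrix.SpecialLinearGroup.coe_mul, inv_mul_cancel]
    rfl
  rw [h1, one_mul]

/-- If the mapped traces differ, the mapped elements are not conjugate. -/
lemma not_isConj_map_of_trace_sub_ne_zero {n : Type*} [Fintype n] [DecidableEq n]
    {R S : Type*} [CommRing R] [CommRing S] (f : R →+* S)
    (x y : Matrix.SpecialLinearGroup n R)
    (h : f (Matrix.trace (↑x : Matrix n n R) - Matrix.trace (↑y : Matrix n n R)) ≠ 0) :
    ¬ IsConj (Matrix.SpecialLinearGroup.map f x) (Matrix.SpecialLinearGroup.map f y) := by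
  intro hc
  apply h
  have htreq := trace_coe_eq_of_isConj hc
  have hx : (↑(Matrix.SpecialLinearGroup.map f x) : Matrix n n S)
      = (↑x : Matrix n n R).map f := rfl
  have hy : (↑(Matrix.SpecialLinearGroup.map f y) : Matrix n n S)
      = (↑y : Matrix n n R).map f := rfl
  rw [hx, hy, trace_map_ringHom, trace_map_ringHom] at htreq
  rw [map_sub, htreq, sub_self]

set_option maxHeartbeats 4000000 in
set_option synthInstance.maxHeartbeats 400000 in
/-- Property (D) implies conjugacy separability. -/
theorem propD_implies_conjugacySeparable (Γ : Type*) [Group Γ] [Group.FG Γ]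
    (hD : ∀ γ η : Γ, ¬ IsConj γ η →
      ∃ (m : ℕ) (ρ : Γ →* Matrix.SpecialLinearGroup (Fin m) ℂ),
        slTrace ρ γ ≠ slTrace ρ η) :
    ∀ γ η : Γ, ¬ IsConj γ η →
      ∃ (Q : Type) (_ : Group Q) (_ : Finite Q) (φ : Γ →* Q),
        ¬ IsConj (φ γ) (φ η) := by
  intro γ η hne
  obtain ⟨m, ρ, htr⟩ := hD γ η hne
  obtain ⟨S, hS⟩ := (Group.FG.out : (⊤ : Subgroup Γ).FG)
  -- The set of all entries of the images of the generators
  set E : Set ℂ := ⋃ g ∈ (S : Set Γ),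
      Set.range (fun p : Fin m × Fin m => (↑(ρ g) : Matrix (Fin m) (Fin m) ℂ) p.1 p.2)
    with hE
  have hEfin : E.Finite :=
    Set.Finite.biUnion S.finite_toSet (fun g _ => Set.finite_range _)
  obtain ⟨A, hAft, hAgen⟩ : ∃ A : Subalgebra ℤ ℂ, Algebra.FiniteType ℤ A ∧ E ⊆ A :=
    ⟨Algebra.adjoin ℤ E,
      (Subalgebra.fg_iff_finiteType _).mp ((Subalgebra.fg_def).mpr ⟨E, hEfin, rfl⟩),
      Algebra.subset_adjoin⟩
  haveI := hAft
  -- The set of group elements whose image has all entries in `A` is a subgroup.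
  let H : Subgroup Γ :=
    { carrier := {g | ∀ i j, (↑(ρ g) : Matrix (Fin m) (Fin m) ℂ) i j ∈ A}
      one_mem' := by
        intro i j
        rw [map_one]
        show (1 : Matrix (Fin m) (Fin m) ℂ) i j ∈ A
        rw [Matrix.one_apply]
        split
        · exact one_mem A
        · exact zero_mem A
      mul_mem' := by
        intro a b ha hb i j
        rw [map_mul]
        show ((↑(ρ a) : Matrix (Fin m) (Fin m) ℂ) * (↑(ρ b) : Matrix (Fin m) (Fin m) ℂ)) i j ∈ A
        rw [Matrix.mul_apply]
        exact Subalgebra.sum_mem _ fun l _ => Subalgebra.mul_mem _ (ha i l) (hb l j)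
      inv_mem' := by
        intro a ha i j
        rw [map_inv, Matrix.SpecialLinearGroup.coe_inv, Matrix.adjugate_apply]
        apply det_mem_subalgebra
        intro i' j'
        rw [Matrix.updateRow_apply]
        split
        · rw [Pi.single_apply]
          split
          · exact one_mem A
          · exact zero_mem A
        · exact ha i' j' }
  have hHtop : ∀ g : Γ, g ∈ H := by
    have hle : Subgroup.closure (↑S : Set Γ) ≤ H :=
      (Subgroup.closure_le _).mpr (fun s hs => fun i j =>
        hAgen (Set.mem_biUnion hs ⟨(i, j), rfl⟩))
    intro g
    exact hle (hS ▸ Subgroup.mem_top g)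
  -- The representation with coefficients in `A`
  let j : ↥A →+* ℂ := A.toSubring.subtype
  have hjinj : Function.Injective j := Subtype.coe_injective
  let N : Γ → Matrix (Fin m) (Fin m) ↥A := fun g =>
    Matrix.of fun i k => (⟨(↑(ρ g) : Matrix (Fin m) (Fin m) ℂ) i k, hHtop g i k⟩ : ↥A)
  have hNmap : ∀ g, (N g).map j = (↑(ρ g) : Matrix (Fin m) (Fin m) ℂ) := by
    intro g; ext i k; rfl
  have hmapinj : Function.Injective
      (fun X : Matrix (Fin m) (Fin m) ↥A => X.map j) := by
    intro X Y h
    ext i k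
    have := congrArg (fun M : Matrix (Fin m) (Fin m) ℂ => M i k) h
    simpa [Matrix.map_apply] using hjinj (by simpa [Matrix.map_apply] using this)
  have hdet : ∀ g, (N g).det = 1 := by
    intro g
    apply hjinj
    rw [RingHom.map_det]
    show ((N g).map j).det = j 1
    rw [hNmap, map_one]
    exact (ρ g).prop
  let ρ' : Γ →* Matrix.SpecialLinearGroup (Fin m) ↥A :=
    { toFun := fun g => ⟨N g, hdet g⟩
      map_one' := by
        apply Subtype.ext
        apply hmapinj
        show (N 1).map j = (1 : Matrix (Fin m) (Fin m) ↥A).map j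
        rw [hNmap, Matrix.map_one j (map_zero j) (map_one j), map_one]
        rfl
      map_mul' := by
        intro a b
        apply Subtype.ext
        apply hmapinj
        show (N (a * b)).map j = (N a * N b).map j
        rw [hNmap, Matrix.map_mul, hNmap, hNmap, map_mul]
        rfl }
  -- the trace difference, as an element of `A`
  let t : ↥A := Matrix.trace (N γ) - Matrix.trace (N η)
  have ht : t ≠ 0 := by
    intro h0
    apply htr
    have : j (Matrix.trace (N γ)) = j (Matrix.trace (N η)) := by
      rw [show Matrix.trace (N γ) = Matrix.trace (N η) from sub_eq_zero.mp h0]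
    rw [← trace_map_ringHom j (N γ), ← trace_map_ringHom j (N η), hNmap, hNmap] at this
    exact this
  -- find a maximal ideal avoiding `t`, with finite residue field
  obtain ⟨M, hMmax, htM, hfin⟩ := exists_maximal_finite_quotient ↥A t ht
  haveI := hMmax
  haveI := hfin
  -- the finite quotient
  set φ : Γ →* Matrix.SpecialLinearGroup (Fin m) (↥A ⧸ M) :=
    (Matrix.SpecialLinearGroup.map (Ideal.Quotient.mk M)).comp ρ' with hφ
  refine ⟨Matrix.SpecialLinearGroup (Fin m) (↥A ⧸ M), inferInstance, inferInstance, φ, ?_⟩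
  exact not_isConj_map_of_trace_sub_ne_zero (Ideal.Quotient.mk M) (ρ' γ) (ρ' η)
    (fun h0 => htM (Ideal.Quotient.eq_zero_iff_mem.mp h0))
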